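/- For each k with 1 ≤ k ≤ m−2, the rational function f_k = (y_{2k-1} y_{2k} + x_3 v_{k+2}) / x_3 is annihilated by every operator X̂ of the coadjoint realization of the Lie algebra d_{2m} (m ≥ 3); i.e., each f_k is an invariant of the coadjoint representation of d_{2m}. Moreover the functions f_1, ..., f_{m-2} are functionally independent (their differentials are linearly independent at a generic point). -/

import Mathlib

/-- Structure constants (listed direction) of the solvable rigid Lie algebra
`d_{2m}` (m ≥ 3); basis indexing: `X_i ↦ i` (i = 0,…,3), `Y_j ↦ 3 + j`
(j = 1,…,2m-4), `V_k ↦ 2m − 1 + k` (k = 1,…,m). -/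
noncomputable def str2m (m i j s : ℕ) : ℂ :=
  (if i = 0 ∧ (j = 1 ∨ j = 2) ∧ s = j + 1 then 1 else 0) +
  (if 4 ≤ i ∧ i ≤ 2 * m - 2 ∧ i % 2 = 0 ∧ j = i + 1 ∧ s = 3 then 1 else 0) +
  (if i = 2 * m ∧ j ≤ 3 ∧ s = j then ((j + 1 : ℕ) : ℂ) else 0) +
  (if i = 2 * m ∧ 4 ≤ j ∧ j ≤ 2 * m - 2 ∧ j % 2 = 0 ∧ s = j then
    ((j / 2 + 3 : ℕ) : ℂ) else 0) +
  (if i = 2 * m ∧ 5 ≤ j ∧ j ≤ 2 * m - 1 ∧ j % 2 = 1 ∧ s = j then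
    -(((j - 3) / 2 : ℕ) : ℂ) else 0) +
  (if i = 2 * m + 1 ∧ 1 ≤ j ∧ j ≤ 3 ∧ s = j then 1 else 0) +
  (if i = 2 * m + 1 ∧ 5 ≤ j ∧ j ≤ 2 * m - 1 ∧ j % 2 = 1 ∧ s = j then 1 else 0) +
  (if 2 * m + 2 ≤ i ∧ i ≤ 3 * m - 1 ∧ j = 2 * (i - (2 * m + 1)) + 2 ∧ s = j then 1 else 0) +
  (if 2 * m + 2 ≤ i ∧ i ≤ 3 * m - 1 ∧ j = 2 * (i - (2 * m + 1)) + 3 ∧ s = j then -1 else 0)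

/-- Antisymmetrized structure constants of `d_{2m}`. -/
noncomputable def C2m (m i j s : ℕ) : ℂ := str2m m i j s - str2m m j i s

/-- Partial derivative `∂F/∂x_j` in coordinates. -/
noncomputable def pd (j : ℕ) (F : (ℕ → ℂ) → ℂ) (p : ℕ → ℂ) : ℂ :=
  deriv (fun t => F (Function.update p j t)) (p j)

/-- The coadjoint operator `X̂_i = −C_{ij}^k x_k ∂_{x_j}` of `d_{2m}`. -/
noncomputable def op2m (m i : ℕ) (F : (ℕ → ℂ) → ℂ) (p : ℕ → ℂ) : ℂ :=
  ∑ j ∈ Finset.range (3 * m),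
    (-(∑ k ∈ Finset.range (3 * m), C2m m i j k * p k)) * pd j F p

/-- The function `f_k = (y_{2k-1} y_{2k} + x_3 v_{k+2})/x_3` in the coordinates
of the dual (`y_{2k-1} ↦ 2k+2`, `y_{2k} ↦ 2k+3`, `v_{k+2} ↦ 2m+k+1`). -/
noncomputable def fk (m k : ℕ) (p : ℕ → ℂ) : ℂ :=
  (p (2 * k + 2) * p (2 * k + 3) + p 3 * p (2 * m + k + 1)) / p 3

/-!
Each `f_k` depends only on `x_3, y_{2k-1}, y_{2k}, v_{k+2}`, so `X̂_i f_k` involves only the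
coefficients of the four corresponding partial derivatives in `X̂_i`. These all vanish unless
`X_i` is one of `V_1, V_2, V_{k+2}, Y_{2k-1}, Y_{2k}`, and for each of these five the surviving
terms cancel: for the `V`'s because `y_{2k-1} y_{2k}` has the same weight as `x_3`, for the `Y`'s
because `[Y_{2k-1}, Y_{2k}] = X_3`. At the point `x_3 = 1`, all other coordinates `0`, the
differential of `f_k` is `dv_{k+2}`, which gives the independence.
-/

open Finset Function

lemma sum_ite_and_eq_mul {N t : ℕ} (P : Prop) [Decidable P] (h : P → t < N) (c : ℂ)
    (p : ℕ → ℂ) :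
    ∑ s ∈ range N, (if P ∧ s = t then c else 0) * p s = if P then c * p t else 0 := by
  by_cases hP : P
  · simp [hP, h hP]
  · simp [hP]

lemma sum_str2m_mul {m : ℕ} (hm : 2 ≤ m) (i j : ℕ) (p : ℕ → ℂ) :
    ∑ s ∈ range (3 * m), str2m m i j s * p s =
    (if i = 0 ∧ (j = 1 ∨ j = 2) then p (j + 1) else 0) +
    (if 4 ≤ i ∧ i ≤ 2 * m - 2 ∧ i % 2 = 0 ∧ j = i + 1 then p 3 else 0) +
    (if i = 2 * m ∧ j ≤ 3 then ((j + 1 : ℕ) : ℂ) * p j else 0) +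
    (if i = 2 * m ∧ 4 ≤ j ∧ j ≤ 2 * m - 2 ∧ j % 2 = 0 then ((j / 2 + 3 : ℕ) : ℂ) * p j else 0) +
    (if i = 2 * m ∧ 5 ≤ j ∧ j ≤ 2 * m - 1 ∧ j % 2 = 1 then -(((j - 3) / 2 : ℕ) : ℂ) * p j
      else 0) +
    (if i = 2 * m + 1 ∧ 1 ≤ j ∧ j ≤ 3 then p j else 0) +
    (if i = 2 * m + 1 ∧ 5 ≤ j ∧ j ≤ 2 * m - 1 ∧ j % 2 = 1 then p j else 0) +
    (if 2 * m + 2 ≤ i ∧ i ≤ 3 * m - 1 ∧ j = 2 * (i - (2 * m + 1)) + 2 then p j else 0) +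
    (if 2 * m + 2 ≤ i ∧ i ≤ 3 * m - 1 ∧ j = 2 * (i - (2 * m + 1)) + 3 then -p j else 0) := by
  simp only [str2m, ← and_assoc, add_mul, sum_add_distrib]
  simp (disch := omega) only [sum_ite_and_eq_mul, one_mul, neg_one_mul]

noncomputable def coadjCoeff (m i j : ℕ) (p : ℕ → ℂ) : ℂ := ∑ s ∈ range (3 * m), C2m m i j s * p s

lemma coadjCoeff_eq (m i j : ℕ) (p : ℕ → ℂ) :
    coadjCoeff m i j p = (∑ s ∈ range (3 * m), str2m m i j s * p s) -
      ∑ s ∈ range (3 * m), str2m m j i s * p s := by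
  simp only [coadjCoeff, C2m, sub_mul, sum_sub_distrib]

lemma coadjCoeff_x3 {m : ℕ} (hm : 2 ≤ m) (i : ℕ) (p : ℕ → ℂ) :
    coadjCoeff m i 3 p = if i = 2 * m then 4 * p 3 else if i = 2 * m + 1 then p 3 else 0 := by
  split_ifs <;> rw [coadjCoeff_eq, sum_str2m_mul hm, sum_str2m_mul hm] <;>
    simp (disch := omega) only [if_pos, if_neg] <;> (push_cast; ring)

section
variable {m k : ℕ} (hk : 1 ≤ k) (hkm : k + 2 ≤ m) (i : ℕ) (p : ℕ → ℂ)
include hk hkm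

lemma coadjCoeff_y_odd :
    coadjCoeff m i (2 * k + 2) p =
      if i = 2 * m then (k + 4) * p (2 * k + 2) else if i = 2 * m + k + 1 then p (2 * k + 2)
      else if i = 2 * k + 3 then -p 3 else 0 := by
  split_ifs <;> rw [coadjCoeff_eq, sum_str2m_mul (by omega), sum_str2m_mul (by omega)] <;>
    simp (disch := omega) only [if_pos, if_neg, show (2 * k + 2) / 2 + 3 = k + 4 by omega] <;>
    (subst_vars; push_cast; ring)

lemma coadjCoeff_y_even :
    coadjCoeff m i (2 * k + 3) p =
      if i = 2 * k + 2 then p 3 else if i = 2 * m then -k * p (2 * k + 3)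
      else if i = 2 * m + 1 then p (2 * k + 3) else if i = 2 * m + k + 1 then -p (2 * k + 3)
      else 0 := by
  split_ifs <;> rw [coadjCoeff_eq, sum_str2m_mul (by omega), sum_str2m_mul (by omega)] <;>
    simp (disch := omega) only [if_pos, if_neg, show (2 * k + 3 - 3) / 2 = k by omega] <;>
    (subst_vars; ring)

lemma coadjCoeff_v :
    coadjCoeff m i (2 * m + k + 1) p =
      if i = 2 * k + 2 then -p (2 * k + 2) else if i = 2 * k + 3 then p (2 * k + 3) else 0 := by
  split_ifs <;> rw [coadjCoeff_eq, sum_str2m_mul (by omega), sum_str2m_mul (by omega)] <;>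
    simp (disch := omega) only [if_pos, if_neg] <;>
    (subst_vars; ring)

end

lemma pd_eq_zero_of_update_eq {F : (ℕ → ℂ) → ℂ} {p : ℕ → ℂ} {j : ℕ}
    (h : ∀ t, F (update p j t) = F p) : pd j F p = 0 := by
  simp only [pd, h, deriv_const]

lemma op2m_eq_sum_of_pd_eq_zero {m i : ℕ} {F : (ℕ → ℂ) → ℂ} {p : ℕ → ℂ} {S : Finset ℕ}
    (hS : S ⊆ range (3 * m)) (hF : ∀ j ∉ S, pd j F p = 0) :
    op2m m i F p = ∑ j ∈ S, -coadjCoeff m i j p * pd j F p :=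
  (sum_subset hS fun j _ hj => by rw [hF j hj, mul_zero]).symm

section
variable {m k : ℕ} (hkm : k + 2 ≤ m) (p : ℕ → ℂ)
include hkm

lemma pd_fk_x3 (hk : 1 ≤ k) (hp : p 3 ≠ 0) :
    pd 3 (fk m k) p = -(p (2 * k + 2) * p (2 * k + 3)) / p 3 ^ 2 := by
  have hf : HasDerivAt (fun t => (p (2 * k + 2) * p (2 * k + 3) + t * p (2 * m + k + 1)) / t)
      _ (p 3) := (((hasDerivAt_id _).mul_const _).const_add _).div (hasDerivAt_id _) hp
  simp (disch := omega) only [pd, fk, update_self, update_of_ne]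
  rw [hf.deriv]
  field_simp
  ring

lemma pd_fk_y_odd : pd (2 * k + 2) (fk m k) p = p (2 * k + 3) / p 3 := by
  have hf : HasDerivAt (fun t => (t * p (2 * k + 3) + p 3 * p (2 * m + k + 1)) / p 3)
      (1 * p (2 * k + 3) / p 3) (p (2 * k + 2)) :=
    (((hasDerivAt_id _).mul_const _).add_const _).div_const _
  simp (disch := omega) only [pd, fk, update_self, update_of_ne]
  rw [hf.deriv, one_mul]

lemma pd_fk_y_even (hk : 1 ≤ k) : pd (2 * k + 3) (fk m k) p = p (2 * k + 2) / p 3 := by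
  have hf : HasDerivAt (fun t => (p (2 * k + 2) * t + p 3 * p (2 * m + k + 1)) / p 3)
      (p (2 * k + 2) * 1 / p 3) (p (2 * k + 3)) :=
    (((hasDerivAt_id _).const_mul _).add_const _).div_const _
  simp (disch := omega) only [pd, fk, update_self, update_of_ne]
  rw [hf.deriv, mul_one]

lemma pd_fk_v (hp : p 3 ≠ 0) : pd (2 * m + k + 1) (fk m k) p = 1 := by
  have hf : HasDerivAt (fun t => (p (2 * k + 2) * p (2 * k + 3) + p 3 * t) / p 3)
      (p 3 * 1 / p 3) (p (2 * m + k + 1)) :=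
    (((hasDerivAt_id _).const_mul _).const_add _).div_const _
  simp (disch := omega) only [pd, fk, update_self, update_of_ne]
  rw [hf.deriv, mul_one, div_self hp]

end

lemma pd_fk_of_ne {m k j : ℕ} (h3 : j ≠ 3) (ha : j ≠ 2 * k + 2) (hb : j ≠ 2 * k + 3)
    (hc : j ≠ 2 * m + k + 1) (p : ℕ → ℂ) : pd j (fk m k) p = 0 :=
  pd_eq_zero_of_update_eq fun t => by simp (disch := omega) only [fk, update_of_ne]

theorem op2m_fk_eq_zero {m k : ℕ} (hk : 1 ≤ k) (hkm : k + 2 ≤ m) {p : ℕ → ℂ} (hp : p 3 ≠ 0)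
    (i : ℕ) : op2m m i (fk m k) p = 0 := by
  have hS : ({3, 2 * k + 2, 2 * k + 3, 2 * m + k + 1} : Finset ℕ) ⊆ range (3 * m) := by
    intro j hj
    simp only [mem_insert, mem_singleton] at hj
    rw [mem_range]
    omega
  rw [op2m_eq_sum_of_pd_eq_zero hS fun j hj => by
      simp only [mem_insert, mem_singleton, not_or] at hj
      exact pd_fk_of_ne hj.1 hj.2.1 hj.2.2.1 hj.2.2.2 p]
  rw [sum_insert (by simp; omega), sum_insert (by simp; omega), sum_insert (by simp; omega),
    sum_singleton, coadjCoeff_x3 (by omega), coadjCoeff_y_odd hk hkm, coadjCoeff_y_even hk hkm,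
    coadjCoeff_v hk hkm, pd_fk_x3 hkm p hk hp, pd_fk_y_odd hkm p, pd_fk_y_even hkm p hk,
    pd_fk_v hkm p hp]
  split_ifs <;> first | omega | (field_simp; ring)

lemma pd_fk_single_three {m k : ℕ} (hk : 1 ≤ k) (hkm : k + 2 ≤ m) (j : ℕ) :
    pd j (fk m k) (Pi.single 3 1) = if j = 2 * m + k + 1 then 1 else 0 := by
  have h3 : (Pi.single 3 1 : ℕ → ℂ) 3 ≠ 0 := by simp
  split_ifs with hc
  · rw [hc, pd_fk_v hkm _ h3]
  by_cases hx : j = 3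
  · rw [hx, pd_fk_x3 hkm _ hk h3]
    simp (disch := omega) only [Pi.single_eq_of_ne, zero_mul, neg_zero, zero_div]
  by_cases ha : j = 2 * k + 2
  · rw [ha, pd_fk_y_odd hkm]
    simp (disch := omega) only [Pi.single_eq_of_ne, zero_div]
  by_cases hb : j = 2 * k + 3
  · rw [hb, pd_fk_y_even hkm _ hk]
    simp (disch := omega) only [Pi.single_eq_of_ne, zero_div]
  exact pd_fk_of_ne hx ha hb hc _

lemma linearIndependent_pd_fk (m : ℕ) :
    LinearIndependent ℂ fun k : Fin (m - 2) => fun j : Fin (3 * m) =>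
      pd j.1 (fk m (k.1 + 1)) (Pi.single 3 1) := by
  have hinj : Injective fun k : Fin (m - 2) => (⟨2 * m + k.1 + 2, by omega⟩ : Fin (3 * m)) :=
    fun a b hab => Fin.ext (by simpa using congrArg Fin.val hab)
  convert (Pi.linearIndependent_single_one (Fin (3 * m)) ℂ).comp _ hinj with k j
  rw [pd_fk_single_three (by omega) (by omega), comp_apply, Pi.single_apply]
  congr 1
  simp only [Fin.ext_iff, eq_iff_iff]
  omega

theorem fk_invariants_d2m_general (m : ℕ) :
    (∀ k, 1 ≤ k → k ≤ m - 2 → ∀ p : ℕ → ℂ, p 3 ≠ 0 →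
      ∀ i < 3 * m, op2m m i (fk m k) p = 0) ∧
    (∃ p : ℕ → ℂ, p 3 ≠ 0 ∧
      LinearIndependent ℂ
        (fun k : Fin (m - 2) => fun j : Fin (3 * m) => pd j.1 (fk m (k.1 + 1)) p)) :=
  ⟨fun _ hk hkm _ hp i _ => op2m_fk_eq_zero hk (by omega) hp i,
    Pi.single 3 1, by simp, linearIndependent_pd_fk m⟩

/-- For `1 ≤ k ≤ m−2` each `f_k = (y_{2k-1}y_{2k} + x_3 v_{k+2})/x_3` is
annihilated by every coadjoint operator of `d_{2m}` (m ≥ 3), i.e. is an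
invariant of the coadjoint representation; moreover `f_1,…,f_{m-2}` are
functionally independent: their differentials are linearly independent at a
(generic) point with `x_3 ≠ 0`. -/
theorem fk_invariants_d2m (m : ℕ) (hm : 3 ≤ m) :
    (∀ k, 1 ≤ k → k ≤ m - 2 → ∀ p : ℕ → ℂ, p 3 ≠ 0 →
      ∀ i < 3 * m, op2m m i (fk m k) p = 0) ∧
    (∃ p : ℕ → ℂ, p 3 ≠ 0 ∧
      LinearIndependent ℂ
        (fun k : Fin (m - 2) => fun j : Fin (3 * m) => pd j.1 (fk m (k.1 + 1)) p)) :=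
  fk_invariants_d2m_general m
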